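/- arXiv:2309.15758 — 3 statements merged into one kernel-verified Lean document; each statement's English description precedes it below -/
import Mathlib

section
/- Fix a unit vector n ∈ ℝ^d and the standard Gaussian measure μ on ℝ^d. Let α, β ∈ [0,1] with α+β ≤ 1, let D f := √(2π) ∫ f(w) (n·w)_+ dμ(w) (a constant), R f(v) := f(v − 2(n·v)n), and suppose f : ℝ^d → ℝ satisfies f(v) = α D f + β R f(v) for all v with n·v < 0. Let U ∈ ℝ^d with n·U = 0. Then ∫_{ℝ^d} (v·U) f(v) (n·v) dμ(v) = ∫_{ℝ^d} (v·U) [(1−β) f(v) − α D f] (n·v)_+ dμ(v). -/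
open MeasureTheory Real Set
open scoped RealInnerProductSpace

noncomputable def stdGaussian (d : ℕ) : Measure (EuclideanSpace ℝ (Fin d)) :=
  (volume : Measure (EuclideanSpace ℝ (Fin d))).withDensity
    (fun v => ENNReal.ofReal ((2 * π) ^ (-(d : ℝ) / 2) * Real.exp (-‖v‖ ^ 2 / 2)))

section aux

variable {d : ℕ} (n : EuclideanSpace ℝ (Fin d))

/-- The specular reflection across the hyperplane orthogonal to `n`. -/
noncomputable def specRefl : EuclideanSpace ℝ (Fin d) ≃ₗᵢ[ℝ] EuclideanSpace ℝ (Fin d) :=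
  Submodule.reflection (ℝ ∙ n)ᗮ

lemma specRefl_apply (hn : ‖n‖ = 1) (v : EuclideanSpace ℝ (Fin d)) :
    specRefl n v = v - (2 * ⟪n, v⟫) • n := by
  rw [specRefl, Submodule.reflection_orthogonal_apply, Submodule.reflection_singleton_apply, hn]
  simp only [RCLike.ofReal_real_eq_id, id, one_pow, div_one]
  rw [two_smul]
  module

lemma specRefl_measurePreserving :
    MeasurePreserving (specRefl n) (stdGaussian d) (stdGaussian d) := by
  have h0 : MeasurePreserving (specRefl n) volume volume :=
    (specRefl n).measurePreserving
  refine ⟨h0.measurable, ?_⟩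
  have hg : Measurable fun v : EuclideanSpace ℝ (Fin d) =>
      ENNReal.ofReal ((2 * π) ^ (-(d : ℝ) / 2) * Real.exp (-‖v‖ ^ 2 / 2)) := by
    measurability
  ext s hs
  rw [Measure.map_apply h0.measurable hs, stdGaussian,
    withDensity_apply _ (hs.preimage h0.measurable), withDensity_apply _ hs]
  calc ∫⁻ v in (specRefl n) ⁻¹' s,
        ENNReal.ofReal ((2 * π) ^ (-(d : ℝ) / 2) * Real.exp (-‖v‖ ^ 2 / 2)) ∂volume
      = ∫⁻ v in (specRefl n) ⁻¹' s,
        ENNReal.ofReal ((2 * π) ^ (-(d : ℝ) / 2) *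
          Real.exp (-‖specRefl n v‖ ^ 2 / 2)) ∂volume := by
        simp [LinearIsometryEquiv.norm_map]
    _ = ∫⁻ y in s, ENNReal.ofReal ((2 * π) ^ (-(d : ℝ) / 2) * Real.exp (-‖y‖ ^ 2 / 2))
          ∂(Measure.map (specRefl n) volume) :=
        (setLIntegral_map hs hg h0.measurable).symm
    _ = _ := by rw [h0.map_eq]

end aux

theorem stmt_4 (d : ℕ) (n U : EuclideanSpace ℝ (Fin d)) (hn : ‖n‖ = 1)
    (hU : ⟪n, U⟫ = 0) (α β : ℝ) (hα : α ∈ Icc (0:ℝ) 1) (hβ : β ∈ Icc (0:ℝ) 1)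
    (hαβ : α + β ≤ 1) (f : EuclideanSpace ℝ (Fin d) → ℝ) (Df : ℝ)
    (hDf : Df = Real.sqrt (2 * π) * ∫ w, f w * max ⟪n, w⟫ 0 ∂(stdGaussian d))
    (hbc : ∀ v, ⟪n, v⟫ < 0 → f v = α * Df + β * f (v - (2 * ⟪n, v⟫) • n))
    (hint1 : Integrable (fun v => ⟪v, U⟫ * f v * ⟪n, v⟫) (stdGaussian d))
    (hint2 : Integrable (fun v => ⟪v, U⟫ * f v * max ⟪n, v⟫ 0) (stdGaussian d)) :
    (∫ v, ⟪v, U⟫ * f v * ⟪n, v⟫ ∂(stdGaussian d)) =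
      ∫ v, ⟪v, U⟫ * ((1 - β) * f v - α * Df) * max ⟪n, v⟫ 0 ∂(stdGaussian d) := by
  set μ := stdGaussian d with hμ
  set e := specRefl n with he
  have he_apply : ∀ v, e v = v - (2 * ⟪n, v⟫) • n := specRefl_apply n hn
  have hmp : MeasurePreserving e μ μ := specRefl_measurePreserving n
  have hemb : MeasurableEmbedding e :=
    (e.toHomeomorph.toMeasurableEquiv).measurableEmbedding
  -- basic pointwise facts
  have h_inner_n : ∀ v, ⟪n, e v⟫ = -⟪n, v⟫ := by
    intro v
    rw [he_apply, inner_sub_right, real_inner_smul_right,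
      real_inner_self_eq_norm_sq, hn]
    ring
  have h_inner_U : ∀ v, ⟪e v, U⟫ = ⟪v, U⟫ := by
    intro v
    rw [he_apply, inner_sub_left, real_inner_smul_left, hU]
    ring
  have h_invol : ∀ v, e (e v) = v := fun v => Submodule.reflection_reflection _ v
  -- F is the "reflected" integrand with positive part
  set F : EuclideanSpace ℝ (Fin d) → ℝ :=
    fun v => ⟪v, U⟫ * (α * Df + β * f v) * max ⟪n, v⟫ 0 with hF
  have hFe : ∀ v, F (e v) = ⟪v, U⟫ * (α * Df + β * f (e v)) * max (-⟪n, v⟫) 0 := by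
    intro v
    simp only [hF, h_inner_U, h_inner_n]
  -- pointwise boundary-condition identity on the negative part
  have hA : ∀ v, F (e v) = ⟪v, U⟫ * f v * max (-⟪n, v⟫) 0 := by
    intro v
    rw [hFe]
    rcases lt_or_ge ⟪n, v⟫ 0 with h | h
    · rw [hbc v h, ← he_apply v]
    · rw [max_eq_right (by linarith : -⟪n, v⟫ ≤ 0)]
      ring
  -- integrability of the negative-part integrand
  have hneg_id : ∀ v : EuclideanSpace ℝ (Fin d),
      ⟪v, U⟫ * f v * max (-⟪n, v⟫) 0 =
        ⟪v, U⟫ * f v * max ⟪n, v⟫ 0 - ⟪v, U⟫ * f v * ⟪n, v⟫ := by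
    intro v
    rcases le_or_gt 0 ⟪n, v⟫ with h | h
    · rw [max_eq_right (by linarith : -⟪n, v⟫ ≤ 0), max_eq_left h]; ring
    · rw [max_eq_left (by linarith : (0:ℝ) ≤ -⟪n, v⟫),
        max_eq_right (le_of_lt h)]; ring
  have hint3 : Integrable (fun v => ⟪v, U⟫ * f v * max (-⟪n, v⟫) 0) μ := by
    have := hint2.sub hint1
    exact this.congr (Filter.Eventually.of_forall fun v => (hneg_id v).symm)
  have hintFe : Integrable (fun v => F (e v)) μ := by
    refine hint3.congr (Filter.Eventually.of_forall fun v => ?_)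
    exact (hA v).symm
  have hintF : Integrable F μ := (hmp.integrable_comp_emb hemb).mp hintFe
  -- change of variables for the F integral
  have hchg : ∫ v, F (e v) ∂μ = ∫ v, F v ∂μ := hmp.integral_comp hemb F
  -- final computation
  have hL : (∫ v, ⟪v, U⟫ * f v * ⟪n, v⟫ ∂μ) =
      (∫ v, ⟪v, U⟫ * f v * max ⟪n, v⟫ 0 ∂μ) - ∫ v, F v ∂μ := by
    rw [← hchg]
    have : ∫ v, F (e v) ∂μ = ∫ v, ⟪v, U⟫ * f v * max (-⟪n, v⟫) 0 ∂μ :=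
      integral_congr_ae (Filter.Eventually.of_forall hA)
    rw [this, ← integral_sub hint2 hint3]
    refine integral_congr_ae (Filter.Eventually.of_forall fun v => ?_)
    dsimp only
    rw [hneg_id v]
    ring
  rw [hL, ← integral_sub hint2 hintF]
  refine integral_congr_ae (Filter.Eventually.of_forall fun v => ?_)
  simp only [hF]
  ring
end

section
/- Fix a unit vector n ∈ ℝ^d and the standard Gaussian measure μ. Let α, β ∈ [0,1] with α+β ≤ 1, D f := √(2π) ∫ f(w)(n·w)_+ dμ(w), R f(v) := f(v − 2(n·v)n), and f : ℝ^d → ℝ satisfy f = α D f + β R f on {n·v < 0}. Then ∫ f² (n·v) dμ = ∫ (1−β²)(f − D f)² (n·v)_+ dμ + ∫ (1−(α+β)²) (D f)² (n·v)_+ dμ. In particular ∫ f² (n·v) dμ ≥ 0. -/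
open MeasureTheory Real Set
open scoped RealInnerProductSpace ENNReal NNReal

lemma gauss1d_integral : ∫ x : ℝ, Real.exp (-x ^ 2 / 2) = Real.sqrt (2 * π) := by
  have h := integral_gaussian (1/2)
  rw [show π / (1/2 : ℝ) = 2 * π by ring] at h
  rw [← h]
  congr 1 with x
  ring_nf

lemma gauss1d_integrable : Integrable (fun x : ℝ => Real.exp (-x ^ 2 / 2)) := by
  have h := integrable_exp_neg_mul_sq (show (0:ℝ) < 1/2 by norm_num)
  convert h using 2 with x
  ring_nf

lemma gauss1d_mul_integrable : Integrable (fun x : ℝ => x * Real.exp (-x ^ 2 / 2)) := by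
  have h := integrable_mul_exp_neg_mul_sq (show (0:ℝ) < 1/2 by norm_num)
  convert h using 2 with x
  ring_nf

lemma gauss1d_max_integrable : Integrable (fun x : ℝ => max x 0 * Real.exp (-x ^ 2 / 2)) := by
  refine Integrable.mono' gauss1d_mul_integrable.abs ?_ ?_
  · exact ((continuous_id.max continuous_const).mul
      ((continuous_pow 2).neg.div_const 2).rexp).aestronglyMeasurable
  · refine Filter.Eventually.of_forall fun x => ?_
    simp only [Real.norm_eq_abs, abs_mul, abs_of_nonneg (le_max_right x 0),
      abs_of_nonneg (Real.exp_pos (-x ^ 2 / 2)).le]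
    gcongr
    exact max_le (le_abs_self x) (abs_nonneg x)

lemma gauss1d_max_integral : ∫ x : ℝ, max x 0 * Real.exp (-x ^ 2 / 2) = 1 := by
  have heq : (fun x : ℝ => max x 0 * Real.exp (-x ^ 2 / 2)) =
      Set.indicator (Ioi (0:ℝ)) (fun x => x * Real.exp (-x ^ 2 / 2)) := by
    funext x
    rcases le_or_gt x 0 with h | h
    · rw [max_eq_right h, Set.indicator_of_notMem (by simpa using h), zero_mul]
    · rw [max_eq_left h.le, Set.indicator_of_mem (by simpa using h)]
  rw [heq, integral_indicator measurableSet_Ioi]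
  have hderiv : ∀ x ∈ Ici (0:ℝ), HasDerivAt (fun y : ℝ => -Real.exp (-y ^ 2 / 2))
      (x * Real.exp (-x ^ 2 / 2)) x := by
    intro x _
    have h1 : HasDerivAt (fun y : ℝ => -y ^ 2 / 2) (-x) x := by
      have := ((hasDerivAt_pow 2 x).neg).div_const 2
      exact this.congr_deriv (by rw [show (2:ℕ) - 1 = 1 from rfl]; push_cast; ring)
    have := (h1.exp).neg
    exact this.congr_deriv (by ring)
  have htend : Filter.Tendsto (fun y : ℝ => -Real.exp (-y ^ 2 / 2)) Filter.atTop (nhds 0) := by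
    rw [show (0:ℝ) = -0 by ring]
    refine Filter.Tendsto.neg ?_
    refine Real.tendsto_exp_atBot.comp ?_
    have : Filter.Tendsto (fun y : ℝ => y ^ 2) Filter.atTop Filter.atTop :=
      Filter.tendsto_pow_atTop two_ne_zero
    have := this.const_mul_atTop_of_neg (show (-(1:ℝ)/2) < 0 by norm_num)
    refine this.congr fun y => by ring
  have hint : IntegrableOn (fun x : ℝ => x * Real.exp (-x ^ 2 / 2)) (Ioi 0) :=
    gauss1d_mul_integrable.integrableOn
  have := integral_Ioi_of_hasDerivAt_of_tendsto' hderiv hint htend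
  rw [this]
  simp

noncomputable def gDen (d : ℕ) : EuclideanSpace ℝ (Fin d) → ℝ :=
  fun v => (2 * π) ^ (-(d : ℝ) / 2) * Real.exp (-‖v‖ ^ 2 / 2)

lemma gDen_pos (d : ℕ) (v : EuclideanSpace ℝ (Fin d)) : 0 < gDen d v :=
  mul_pos (Real.rpow_pos_of_pos (by positivity) _) (Real.exp_pos _)

lemma gDen_cont (d : ℕ) : Continuous (gDen d) :=
  continuous_const.mul (((continuous_norm.pow 2).neg.div_const 2).rexp)

lemma stdGaussian_eq_withDensity (d : ℕ) :
    stdGaussian d = (volume : Measure (EuclideanSpace ℝ (Fin d))).withDensity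
      (fun v => ((gDen d v).toNNReal : ℝ≥0∞)) := rfl

lemma integral_stdGaussian (d : ℕ) (g : EuclideanSpace ℝ (Fin d) → ℝ) :
    ∫ v, g v ∂(stdGaussian d) = ∫ v, gDen d v * g v := by
  rw [stdGaussian_eq_withDensity,
    integral_withDensity_eq_integral_smul ((gDen_cont d).measurable.real_toNNReal) g]
  refine integral_congr_ae (Filter.Eventually.of_forall fun v => ?_)
  show (gDen d v).toNNReal • g v = gDen d v * g v
  rw [NNReal.smul_def, Real.coe_toNNReal _ (gDen_pos d v).le, smul_eq_mul]

lemma integrable_stdGaussian_iff (d : ℕ) (g : EuclideanSpace ℝ (Fin d) → ℝ) :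
    Integrable g (stdGaussian d) ↔ Integrable (fun v => gDen d v * g v) volume := by
  rw [stdGaussian_eq_withDensity,
    integrable_withDensity_iff_integrable_smul ((gDen_cont d).measurable.real_toNNReal)]
  have : (fun v => ((gDen d v).toNNReal : ℝ≥0) • g v) = fun v => gDen d v * g v := by
    funext v
    show (gDen d v).toNNReal • g v = gDen d v * g v
    rw [NNReal.smul_def, Real.coe_toNNReal _ (gDen_pos d v).le, smul_eq_mul]
  rw [this]

lemma stdGaussian_measurePreserving (d : ℕ)
    (e : EuclideanSpace ℝ (Fin d) ≃ₗᵢ[ℝ] EuclideanSpace ℝ (Fin d)) :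
    MeasurePreserving e (stdGaussian d) (stdGaussian d) := by
  refine ⟨e.continuous.measurable, ?_⟩
  ext s hs
  rw [Measure.map_apply e.continuous.measurable hs, stdGaussian,
    withDensity_apply _ (hs.preimage e.continuous.measurable), withDensity_apply _ hs]
  calc ∫⁻ v in e ⁻¹' s, ENNReal.ofReal ((2 * π) ^ (-(d : ℝ) / 2) * Real.exp (-‖v‖ ^ 2 / 2))
      = ∫⁻ v in e ⁻¹' s,
          ENNReal.ofReal ((2 * π) ^ (-(d : ℝ) / 2) * Real.exp (-‖e v‖ ^ 2 / 2)) := by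
        refine lintegral_congr fun v => ?_
        rw [e.norm_map]
    _ = ∫⁻ v in s, ENNReal.ofReal ((2 * π) ^ (-(d : ℝ) / 2) * Real.exp (-‖v‖ ^ 2 / 2)) :=
        e.measurePreserving.setLIntegral_comp_preimage_emb
          e.toHomeomorph.measurableEmbedding
          (fun v => ENNReal.ofReal ((2 * π) ^ (-(d : ℝ) / 2) * Real.exp (-‖v‖ ^ 2 / 2))) s

lemma integral_comp_iso (d : ℕ)
    (e : EuclideanSpace ℝ (Fin d) ≃ₗᵢ[ℝ] EuclideanSpace ℝ (Fin d))
    (g : EuclideanSpace ℝ (Fin d) → ℝ) :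
    ∫ v, g (e v) ∂(stdGaussian d) = ∫ v, g v ∂(stdGaussian d) :=
  (stdGaussian_measurePreserving d e).integral_comp e.toHomeomorph.measurableEmbedding g

lemma integrable_comp_iso (d : ℕ)
    (e : EuclideanSpace ℝ (Fin d) ≃ₗᵢ[ℝ] EuclideanSpace ℝ (Fin d))
    (g : EuclideanSpace ℝ (Fin d) → ℝ) :
    Integrable (fun v => g (e v)) (stdGaussian d) ↔ Integrable g (stdGaussian d) :=
  (stdGaussian_measurePreserving d e).integrable_comp_emb e.toHomeomorph.measurableEmbedding

lemma coord_max (d : ℕ) (i₀ : Fin d) :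
    Integrable (fun v : EuclideanSpace ℝ (Fin d) => max (v i₀) 0) (stdGaussian d) ∧
    ∫ v, max (v i₀) 0 ∂(stdGaussian d) = (Real.sqrt (2 * π))⁻¹ := by
  set c1 : ℝ := (2 * π) ^ (-(1:ℝ) / 2) with hc1def
  have h2π : (0:ℝ) < 2 * π := by positivity
  have hc1 : c1 = (Real.sqrt (2 * π))⁻¹ := by
    rw [hc1def, show (-(1:ℝ)/2) = -(1/2 : ℝ) by norm_num, Real.rpow_neg h2π.le,
      ← Real.sqrt_eq_rpow]
  have hc1s : c1 * Real.sqrt (2 * π) = 1 := by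
    rw [hc1]
    exact inv_mul_cancel₀ (by positivity)
  set h : Fin d → ℝ → ℝ :=
    fun i t => (if i = i₀ then max t 0 else 1) * (c1 * Real.exp (-t ^ 2 / 2)) with hdef
  set G : EuclideanSpace ℝ (Fin d) → ℝ := fun v => gDen d v * max (v i₀) 0 with hGdef
  -- the key pointwise identity
  have hkey : ∀ x : Fin d → ℝ,
      G ((MeasurableEquiv.toLp 2 (Fin d → ℝ)).symm.symm x) = ∏ i, h i (x i) := by
    intro x
    set y := (MeasurableEquiv.toLp 2 (Fin d → ℝ)).symm.symm x with hydef
    have hy : ∀ i, y i = x i := by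
      intro i
      rw [hydef]; rfl
    have hnorm : ‖y‖ ^ 2 = ∑ i, x i ^ 2 := by
      rw [EuclideanSpace.norm_eq]
      rw [Real.sq_sqrt (by positivity)]
      refine Finset.sum_congr rfl fun i _ => ?_
      rw [hy, Real.norm_eq_abs, sq_abs]
    have hpow : c1 ^ (d : ℕ) = (2 * π) ^ (-(d : ℝ) / 2) := by
      rw [hc1def, ← Real.rpow_natCast ((2 * π) ^ (-(1:ℝ)/2)) d, ← Real.rpow_mul h2π.le]
      congr 1
      ring
    calc G y = (2 * π) ^ (-(d : ℝ) / 2) * Real.exp (-‖y‖ ^ 2 / 2) * max (x i₀) 0 := by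
          rw [hGdef]; simp only [gDen, hy]
      _ = max (x i₀) 0 * (c1 ^ (d : ℕ) * Real.exp (∑ i, -x i ^ 2 / 2)) := by
          rw [hpow, hnorm]
          rw [show (∑ i, -x i ^ 2 / 2) = -(∑ i, x i ^ 2) / 2 by
            rw [neg_div, ← Finset.sum_div, Finset.sum_neg_distrib, neg_div]]
          ring
      _ = max (x i₀) 0 * ∏ i, (c1 * Real.exp (-x i ^ 2 / 2)) := by
          rw [Finset.prod_mul_distrib, Finset.prod_const, Real.exp_sum, Finset.card_univ,
            Fintype.card_fin]
      _ = (∏ i, if i = i₀ then max (x i) 0 else 1) * ∏ i, (c1 * Real.exp (-x i ^ 2 / 2)) := by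
          rw [Finset.prod_ite_eq']
          simp
      _ = ∏ i, h i (x i) := by rw [← Finset.prod_mul_distrib]
  have hmeas := (EuclideanSpace.volume_preserving_symm_measurableEquiv_toLp (Fin d)).symm
  have hemb := MeasurableEquiv.measurableEmbedding (MeasurableEquiv.toLp 2 (Fin d → ℝ)).symm.symm
  -- integrability of each factor
  have hint : ∀ i, Integrable (h i) (volume : Measure ℝ) := by
    intro i
    have base : Integrable
        (fun t : ℝ => c1 * ((if i = i₀ then max t 0 else 1) * Real.exp (-t ^ 2 / 2)))
        (volume : Measure ℝ) := by
      by_cases hi : i = i₀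
      · subst hi
        have := gauss1d_max_integrable.const_mul c1
        refine this.congr (Filter.Eventually.of_forall fun t => by simp; try ring)
      · simp only [if_neg hi, one_mul]
        exact gauss1d_integrable.const_mul c1
    refine base.congr (Filter.Eventually.of_forall fun t => ?_)
    simp only [hdef]
    ring
  have hval : ∀ i, (∫ t : ℝ, h i t) = if i = i₀ then (Real.sqrt (2 * π))⁻¹ else 1 := by
    intro i
    by_cases hi : i = i₀
    · subst hi
      rw [show h i = fun t : ℝ => c1 * (max t 0 * Real.exp (-t ^ 2 / 2)) from
          funext fun t => by simp [hdef]; ring]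
      rw [integral_const_mul, gauss1d_max_integral, mul_one, hc1]
      simp
    · rw [show h i = fun t : ℝ => c1 * Real.exp (-t ^ 2 / 2) from
          funext fun t => by simp [hdef, hi]]
      rw [integral_const_mul, gauss1d_integral, if_neg hi, hc1s]
  have hprodint : Integrable (fun x : Fin d → ℝ => ∏ i, h i (x i)) volume :=
    Integrable.fintype_prod hint
  constructor
  · rw [integrable_stdGaussian_iff]
    have := (hmeas.integrable_comp_emb hemb
      (g := fun v : EuclideanSpace ℝ (Fin d) => gDen d v * max (v i₀) 0)).mp
    refine this ?_
    refine hprodint.congr (Filter.Eventually.of_forall fun x => ?_)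
    exact (hkey x).symm
  · rw [integral_stdGaussian]
    have hco := hmeas.integral_comp' (f := (MeasurableEquiv.toLp 2 (Fin d → ℝ)).symm.symm)
      (fun v : EuclideanSpace ℝ (Fin d) => gDen d v * max (v i₀) 0)
    rw [← hco]
    calc (∫ x : Fin d → ℝ, G ((MeasurableEquiv.toLp 2 (Fin d → ℝ)).symm.symm x))
        = ∫ x : Fin d → ℝ, ∏ i, h i (x i) := by
          refine integral_congr_ae (Filter.Eventually.of_forall fun x => hkey x)
      _ = ∏ i, ∫ t : ℝ, h i t := MeasureTheory.integral_fintype_prod_eq_prod h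
      _ = (Real.sqrt (2 * π))⁻¹ := by
          rw [show (∏ i, ∫ t : ℝ, h i t)
              = ∏ i, if i = i₀ then (Real.sqrt (2 * π))⁻¹ else 1 from
            Finset.prod_congr rfl fun i _ => hval i]
          rw [Finset.prod_ite_eq']
          simp

lemma max_inner (d : ℕ) (n : EuclideanSpace ℝ (Fin d)) (hn : ‖n‖ = 1) :
    Integrable (fun v => max ⟪n, v⟫ 0) (stdGaussian d) ∧
    ∫ v, max ⟪n, v⟫ 0 ∂(stdGaussian d) = (Real.sqrt (2 * π))⁻¹ := by
  rcases Nat.eq_zero_or_pos d with hd | hd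
  · exfalso
    subst hd
    rw [EuclideanSpace.norm_eq] at hn
    simp at hn
  have hcard : Module.finrank ℝ (EuclideanSpace ℝ (Fin d)) = Fintype.card (Fin d) := by
    simp [finrank_euclideanSpace]
  have horth : Orthonormal ℝ
      ((({⟨0, hd⟩} : Set (Fin d))).restrict (fun _ : Fin d => n)) := by
    constructor
    · intro i
      exact hn
    · rintro ⟨i, hi⟩ ⟨j, hj⟩ hij
      exact absurd (Subtype.ext ((Set.mem_singleton_iff.mp hi).trans
        (Set.mem_singleton_iff.mp hj).symm)) hij
  obtain ⟨b, hb⟩ := horth.exists_orthonormalBasis_extension_of_card_eq hcard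
  have hbn : b ⟨0, hd⟩ = n := hb _ rfl
  have he : ∀ v : EuclideanSpace ℝ (Fin d), ⟪n, b.repr.symm v⟫ = v ⟨0, hd⟩ := by
    intro v
    rw [← hbn, ← b.repr_apply_apply (b.repr.symm v) ⟨0, hd⟩,
      LinearIsometryEquiv.apply_symm_apply]
  constructor
  · have h1 := (coord_max d ⟨0, hd⟩).1
    have h2 := integrable_comp_iso d b.repr.symm (fun v => max ⟪n, v⟫ 0)
    refine h2.mp (h1.congr (Filter.Eventually.of_forall fun v => ?_))
    simp only [he]
  · rw [← integral_comp_iso d b.repr.symm (fun v => max ⟪n, v⟫ 0)]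
    simp_rw [he]
    exact (coord_max d ⟨0, hd⟩).2

section reflection

variable {d : ℕ} (n : EuclideanSpace ℝ (Fin d))

noncomputable def reflMap (n : EuclideanSpace ℝ (Fin d)) :
    EuclideanSpace ℝ (Fin d) →ₗ[ℝ] EuclideanSpace ℝ (Fin d) where
  toFun := fun v => v - (2 * ⟪n, v⟫) • n
  map_add' := fun x y => by
    simp only [inner_add_right, mul_add, add_smul]
    abel
  map_smul' := fun c x => by
    simp only [inner_smul_right, smul_sub, smul_smul, RingHom.id_apply]
    rw [mul_comm c (2 * ⟪n, x⟫), mul_assoc]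
    ring_nf

lemma inner_reflMap (hn : ‖n‖ = 1) (v : EuclideanSpace ℝ (Fin d)) :
    ⟪n, v - (2 * ⟪n, v⟫) • n⟫ = -⟪n, v⟫ := by
  rw [inner_sub_right, real_inner_smul_right, real_inner_self_eq_norm_sq, hn]
  ring

lemma reflMap_involutive (hn : ‖n‖ = 1) : Function.Involutive (reflMap n) := by
  intro v
  show (v - (2 * ⟪n, v⟫) • n) - (2 * ⟪n, v - (2 * ⟪n, v⟫) • n⟫) • n = v
  rw [inner_reflMap n hn, mul_neg, neg_smul, sub_neg_eq_add, sub_add_cancel]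

lemma reflMap_norm (hn : ‖n‖ = 1) (v : EuclideanSpace ℝ (Fin d)) :
    ‖v - (2 * ⟪n, v⟫) • n‖ = ‖v‖ := by
  have h2 : ‖v - (2 * ⟪n, v⟫) • n‖ ^ 2 = ‖v‖ ^ 2 := by
    rw [norm_sub_sq_real, real_inner_smul_right, norm_smul, hn, mul_one,
      Real.norm_eq_abs, sq_abs, real_inner_comm v n]
    ring
  exact (sq_eq_sq₀ (norm_nonneg _) (norm_nonneg _)).mp h2

noncomputable def reflIso (n : EuclideanSpace ℝ (Fin d)) (hn : ‖n‖ = 1) :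
    EuclideanSpace ℝ (Fin d) ≃ₗᵢ[ℝ] EuclideanSpace ℝ (Fin d) where
  toLinearEquiv := LinearEquiv.ofInvolutive (reflMap n) (reflMap_involutive n hn)
  norm_map' := fun v => reflMap_norm n hn v

lemma reflIso_apply (hn : ‖n‖ = 1) (v : EuclideanSpace ℝ (Fin d)) :
    reflIso n hn v = v - (2 * ⟪n, v⟫) • n := rfl

lemma reflIso_inner (hn : ‖n‖ = 1) (v : EuclideanSpace ℝ (Fin d)) :
    ⟪n, reflIso n hn v⟫ = -⟪n, v⟫ := inner_reflMap n hn v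

lemma reflIso_refl (hn : ‖n‖ = 1) (v : EuclideanSpace ℝ (Fin d)) :
    reflIso n hn (reflIso n hn v) = v := reflMap_involutive n hn v

end reflection

theorem stmt_5 (d : ℕ) (n : EuclideanSpace ℝ (Fin d)) (hn : ‖n‖ = 1)
    (α β : ℝ) (hα : α ∈ Icc (0:ℝ) 1) (hβ : β ∈ Icc (0:ℝ) 1) (hαβ : α + β ≤ 1)
    (f : EuclideanSpace ℝ (Fin d) → ℝ) (Df : ℝ)
    (hDf : Df = Real.sqrt (2 * π) * ∫ w, f w * max ⟪n, w⟫ 0 ∂(stdGaussian d))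
    (hbc : ∀ v, ⟪n, v⟫ < 0 → f v = α * Df + β * f (v - (2 * ⟪n, v⟫) • n))
    (hint1 : Integrable (fun v => f v ^ 2 * |⟪n, v⟫|) (stdGaussian d))
    (hint2 : Integrable (fun v => f v * max ⟪n, v⟫ 0) (stdGaussian d)) :
    (∫ v, f v ^ 2 * ⟪n, v⟫ ∂(stdGaussian d)) =
      (∫ v, (1 - β ^ 2) * (f v - Df) ^ 2 * max ⟪n, v⟫ 0 ∂(stdGaussian d)) +
        (∫ v, (1 - (α + β) ^ 2) * Df ^ 2 * max ⟪n, v⟫ 0 ∂(stdGaussian d)) ∧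
    0 ≤ ∫ v, f v ^ 2 * ⟪n, v⟫ ∂(stdGaussian d) := by
  obtain ⟨hPint, hPval⟩ := max_inner d n hn
  set μ := stdGaussian d with hμdef
  set R := reflIso n hn with hRdef
  set P : EuclideanSpace ℝ (Fin d) → ℝ := fun v => max ⟪n, v⟫ 0 with hPdef
  set s : ℝ := (Real.sqrt (2 * π))⁻¹ with hsdef
  have hRinner : ∀ v, ⟪n, R v⟫ = -⟪n, v⟫ := fun v => reflIso_inner n hn v
  have hRR : ∀ v, R (R v) = v := fun v => reflIso_refl n hn v
  have hRapply : ∀ v : EuclideanSpace ℝ (Fin d),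
      v - (2 * ⟪n, v⟫) • n = R v := fun v => (reflIso_apply n hn v).symm
  have hs2π : (0:ℝ) < Real.sqrt (2 * π) := Real.sqrt_pos.mpr (by positivity)
  have hfP : ∫ v, f v * P v ∂μ = Df * s := by
    rw [hsdef, hDf, mul_comm (Real.sqrt (2 * π)) _, mul_assoc,
      mul_inv_cancel₀ hs2π.ne', mul_one]
  have hinner_cont : Continuous fun v : EuclideanSpace ℝ (Fin d) => ⟪n, v⟫ :=
    continuous_const.inner continuous_id
  have hfPint : Integrable (fun v => f v * P v) μ := hint2
  -- integrability of f^2 * P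
  have hA : Integrable (fun v => f v ^ 2 * P v) μ := by
    have hmeas : AEStronglyMeasurable (fun v : EuclideanSpace ℝ (Fin d) =>
        if 0 ≤ ⟪n, v⟫ then (1:ℝ) else 0) μ := by
      refine (Measurable.ite ?_ measurable_const measurable_const).aestronglyMeasurable
      exact measurableSet_le measurable_const hinner_cont.measurable
    have hb := hint1.bdd_mul (c := 1) hmeas (Filter.Eventually.of_forall fun v => by dsimp; split <;> simp)
    refine hb.congr (Filter.Eventually.of_forall fun v => ?_)
    simp only [hPdef]
    split_ifs with hcond
    · rw [one_mul, abs_of_nonneg hcond, max_eq_left hcond]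
    · rw [zero_mul, max_eq_right (not_le.mp hcond).le, mul_zero]
  -- integrability of f^2 * (P ∘ R)
  have hB : Integrable (fun v => f v ^ 2 * P (R v)) μ := by
    have hmeas : AEStronglyMeasurable (fun v : EuclideanSpace ℝ (Fin d) =>
        if ⟪n, v⟫ ≤ 0 then (1:ℝ) else 0) μ := by
      refine (Measurable.ite ?_ measurable_const measurable_const).aestronglyMeasurable
      exact measurableSet_le hinner_cont.measurable measurable_const
    have hb := hint1.bdd_mul (c := 1) hmeas (Filter.Eventually.of_forall fun v => by dsimp; split <;> simp)
    refine hb.congr (Filter.Eventually.of_forall fun v => ?_)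
    simp only [hPdef]
    rw [hRinner v]
    split_ifs with hcond
    · rw [one_mul, abs_of_nonpos hcond, max_eq_left (neg_nonneg.mpr hcond)]
    · rw [zero_mul, max_eq_right (neg_nonpos.mpr (not_le.mp hcond).le), mul_zero]
  -- pointwise decomposition
  have hdecomp : ∀ v, f v ^ 2 * ⟪n, v⟫ = f v ^ 2 * P v - f v ^ 2 * P (R v) := by
    intro v
    simp only [hPdef]
    rw [hRinner v]
    rcases le_total ⟪n, v⟫ 0 with h | h
    · rw [max_eq_right h, max_eq_left (neg_nonneg.mpr h)]; ring
    · rw [max_eq_left h, max_eq_right (neg_nonpos.mpr h)]; ring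
  have hLHS : ∫ v, f v ^ 2 * ⟪n, v⟫ ∂μ
      = (∫ v, f v ^ 2 * P v ∂μ) - ∫ v, f v ^ 2 * P (R v) ∂μ := by
    rw [← integral_sub hA hB]
    exact integral_congr_ae (Filter.Eventually.of_forall fun v => hdecomp v)
  -- change of variables
  have hCoV : ∫ v, f (R v) ^ 2 * P v ∂μ = ∫ v, f v ^ 2 * P (R v) ∂μ := by
    have h0 := integral_comp_iso d R (fun w => f w ^ 2 * P (R w))
    calc ∫ v, f (R v) ^ 2 * P v ∂μ = ∫ v, f (R v) ^ 2 * P (R (R v)) ∂μ := by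
          refine integral_congr_ae (Filter.Eventually.of_forall fun v => ?_)
          simp only [hRR]
      _ = ∫ v, f v ^ 2 * P (R v) ∂μ := h0
  -- boundary condition
  have hbcR : ∀ v, f (R v) ^ 2 * P v = (α * Df + β * f v) ^ 2 * P v := by
    intro v
    rcases le_or_gt ⟪n, v⟫ 0 with h | h
    · have hP0 : P v = 0 := max_eq_right h
      rw [hP0, mul_zero, mul_zero]
    · have hneg : ⟪n, R v⟫ < 0 := by rw [hRinner]; linarith
      have hb := hbc (R v) hneg
      rw [hRapply (R v), hRR] at hb
      rw [hb]
  have hmid : ∫ v, f v ^ 2 * P (R v) ∂μ = ∫ v, (α * Df + β * f v) ^ 2 * P v ∂μ := by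
    rw [← hCoV]
    exact integral_congr_ae (Filter.Eventually.of_forall fun v => hbcR v)
  -- expansion of the reflected integral
  have hsplit : ∫ v, (α * Df + β * f v) ^ 2 * P v ∂μ
      = α ^ 2 * Df ^ 2 * s + 2 * α * β * Df * (Df * s)
        + β ^ 2 * ∫ v, f v ^ 2 * P v ∂μ := by
    have hexp : ∀ v, (α * Df + β * f v) ^ 2 * P v
        = (α ^ 2 * Df ^ 2) * P v + (2 * α * β * Df) * (f v * P v)
          + β ^ 2 * (f v ^ 2 * P v) := fun v => by ring
    rw [integral_congr_ae (Filter.Eventually.of_forall hexp)]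
    have I1 : Integrable (fun v => (α ^ 2 * Df ^ 2) * P v) μ := hPint.const_mul _
    have I2 : Integrable (fun v => (2 * α * β * Df) * (f v * P v)) μ := hfPint.const_mul _
    have I3 : Integrable (fun v => β ^ 2 * (f v ^ 2 * P v)) μ := hA.const_mul _
    have I12 : Integrable (fun v => (α ^ 2 * Df ^ 2) * P v
        + (2 * α * β * Df) * (f v * P v)) μ := I1.add I2
    rw [integral_add I12 I3, integral_add I1 I2,
      integral_const_mul, integral_const_mul, integral_const_mul]
    rw [hPval, hfP]
  -- expansion of the first target integral
  have htgt1 : ∫ v, (1 - β ^ 2) * (f v - Df) ^ 2 * P v ∂μ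
      = (1 - β ^ 2) * ((∫ v, f v ^ 2 * P v ∂μ) - 2 * Df * (Df * s) + Df ^ 2 * s) := by
    have hexp : ∀ v, (1 - β ^ 2) * (f v - Df) ^ 2 * P v
        = (1 - β ^ 2) * (f v ^ 2 * P v) + (-(2 * (1 - β ^ 2) * Df)) * (f v * P v)
          + ((1 - β ^ 2) * Df ^ 2) * P v := fun v => by ring
    rw [integral_congr_ae (Filter.Eventually.of_forall hexp)]
    have I1 : Integrable (fun v => (1 - β ^ 2) * (f v ^ 2 * P v)) μ := hA.const_mul _
    have I2 : Integrable (fun v => (-(2 * (1 - β ^ 2) * Df)) * (f v * P v)) μ :=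
      hfPint.const_mul _
    have I3 : Integrable (fun v => ((1 - β ^ 2) * Df ^ 2) * P v) μ := hPint.const_mul _
    have I12 : Integrable (fun v => (1 - β ^ 2) * (f v ^ 2 * P v)
        + (-(2 * (1 - β ^ 2) * Df)) * (f v * P v)) μ := I1.add I2
    rw [integral_add I12 I3, integral_add I1 I2,
      integral_const_mul, integral_const_mul, integral_const_mul]
    rw [hPval, hfP]
    ring
  -- the second target integral
  have htgt2 : ∫ v, (1 - (α + β) ^ 2) * Df ^ 2 * P v ∂μ
      = (1 - (α + β) ^ 2) * Df ^ 2 * s := by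
    rw [integral_const_mul, hPval]
  -- the main identity
  have hmain : ∫ v, f v ^ 2 * ⟪n, v⟫ ∂μ
      = (∫ v, (1 - β ^ 2) * (f v - Df) ^ 2 * P v ∂μ)
        + ∫ v, (1 - (α + β) ^ 2) * Df ^ 2 * P v ∂μ := by
    rw [hLHS, hmid, hsplit, htgt1, htgt2]
    ring
  refine ⟨hmain, ?_⟩
  rw [hmain]
  have hβ1 : β ^ 2 ≤ 1 := pow_le_one₀ hβ.1 hβ.2
  have hαβ1 : (α + β) ^ 2 ≤ 1 := pow_le_one₀ (by linarith [hα.1, hβ.1]) hαβ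
  refine add_nonneg (integral_nonneg fun v => ?_) (integral_nonneg fun v => ?_)
  · exact mul_nonneg (mul_nonneg (by linarith) (sq_nonneg _)) (le_max_right ⟪n, v⟫ 0)
  · exact mul_nonneg (mul_nonneg (by linarith) (sq_nonneg _)) (le_max_right ⟪n, v⟫ 0)
end

section
/- Under the same setting as the previous identity (fixed unit vector n, Gaussian μ, α,β ∈ [0,1] with α+β ≤ 1, boundary condition f = αDf + βRf on {n·v<0}), one also has ∫ f²(n·v) dμ = ∫ (α² + 2αβ)(f − Df)² (n·v)_+ dμ + ∫ (1−(α+β)²) f² (n·v)_+ dμ. -/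
open MeasureTheory Real Set
open scoped RealInnerProductSpace
open scoped ENNReal NNReal

namespace StdGaussianAux

noncomputable def ρ (d : ℕ) (v : EuclideanSpace ℝ (Fin d)) : ℝ :=
  (2 * π) ^ (-(d : ℝ) / 2) * Real.exp (-‖v‖ ^ 2 / 2)

lemma ρ_nonneg (d : ℕ) (v : EuclideanSpace ℝ (Fin d)) : 0 ≤ ρ d v := by
  have h2π : (0:ℝ) < 2 * π := by positivity
  unfold ρ; positivity

lemma ρ_continuous (d : ℕ) : Continuous (ρ d) := by
  unfold ρ
  fun_prop

lemma stdGaussian_eq (d : ℕ) :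
    stdGaussian d = (volume : Measure (EuclideanSpace ℝ (Fin d))).withDensity
      (fun v => ((ρ d v).toNNReal : ℝ≥0∞)) := rfl

lemma integral_stdGaussian (d : ℕ) (g : EuclideanSpace ℝ (Fin d) → ℝ) :
    ∫ v, g v ∂(stdGaussian d) = ∫ v, ρ d v * g v := by
  rw [stdGaussian_eq, integral_withDensity_eq_integral_smul
    ((ρ_continuous d).measurable.real_toNNReal) g]
  refine integral_congr_ae (Filter.Eventually.of_forall fun v => ?_)
  simp [NNReal.smul_def, Real.coe_toNNReal _ (ρ_nonneg d v)]

lemma integrable_stdGaussian_iff (d : ℕ) (g : EuclideanSpace ℝ (Fin d) → ℝ) :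
    Integrable g (stdGaussian d) ↔ Integrable (fun v => ρ d v * g v) volume := by
  rw [stdGaussian_eq, integrable_withDensity_iff_integrable_smul
    ((ρ_continuous d).measurable.real_toNNReal)]
  refine integrable_congr (Filter.Eventually.of_forall fun v => ?_)
  simp [NNReal.smul_def, Real.coe_toNNReal _ (ρ_nonneg d v)]

lemma integral_comp_isometry (d : ℕ)
    (e : EuclideanSpace ℝ (Fin d) ≃ₗᵢ[ℝ] EuclideanSpace ℝ (Fin d))
    (g : EuclideanSpace ℝ (Fin d) → ℝ) :
    ∫ v, g (e v) ∂(stdGaussian d) = ∫ v, g v ∂(stdGaussian d) := by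
  rw [integral_stdGaussian, integral_stdGaussian]
  have h := (e.measurePreserving).integral_comp e.toHomeomorph.measurableEmbedding
    (fun w => ρ d w * g w)
  rw [← h]
  refine integral_congr_ae (Filter.Eventually.of_forall fun v => ?_)
  simp [ρ, e.norm_map]

lemma integrable_comp_isometry (d : ℕ)
    (e : EuclideanSpace ℝ (Fin d) ≃ₗᵢ[ℝ] EuclideanSpace ℝ (Fin d))
    (g : EuclideanSpace ℝ (Fin d) → ℝ) :
    Integrable (fun v => g (e v)) (stdGaussian d) ↔ Integrable g (stdGaussian d) := by
  rw [integrable_stdGaussian_iff, integrable_stdGaussian_iff]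
  have hfun : (fun v => ρ d v * g (e v)) = fun v => (fun w => ρ d w * g w) (e v) := by
    funext v; simp [ρ, e.norm_map]
  rw [hfun]
  have h := (e.measurePreserving).integrable_comp_emb (g := fun w => ρ d w * g w)
    e.toHomeomorph.measurableEmbedding
  exact h

lemma integrable_max_mul_exp : Integrable (fun t : ℝ => max t 0 * Real.exp (-(1/2) * t ^ 2)) := by
  have hint : Integrable (fun t : ℝ => t * Real.exp (-(1/2) * t ^ 2)) :=
    integrable_mul_exp_neg_mul_sq (by norm_num)
  have hcont : Continuous (fun t : ℝ => max t 0 * Real.exp (-(1/2) * t ^ 2)) :=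
    (continuous_id.max continuous_const).mul
      (Real.continuous_exp.comp (continuous_const.mul (continuous_pow 2)))
  have hbound : ∀ t : ℝ, ‖max t 0 * Real.exp (-(1/2) * t ^ 2)‖
      ≤ |t * Real.exp (-(1/2) * t ^ 2)| := by
    intro t
    have h1 : max t 0 ≤ |t| := max_le (le_abs_self t) (abs_nonneg t)
    have h2 : (0:ℝ) ≤ Real.exp (-(1/2) * t ^ 2) := (Real.exp_pos _).le
    rw [Real.norm_eq_abs, abs_mul, abs_of_nonneg h2, abs_of_nonneg (le_max_right t 0), abs_mul,
      abs_of_nonneg h2]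
    exact mul_le_mul_of_nonneg_right h1 h2
  exact Integrable.mono' hint.abs hcont.aestronglyMeasurable
    (Filter.Eventually.of_forall hbound)

lemma integral_onedim : ∫ t : ℝ, max t 0 * Real.exp (-(1/2) * t ^ 2) = 1 := by
  have hint : Integrable (fun t : ℝ => t * Real.exp (-(1/2) * t ^ 2)) :=
    integrable_mul_exp_neg_mul_sq (by norm_num)
  have hsplit := intervalIntegral.integral_Iic_add_Ioi (b := (0:ℝ)) integrable_max_mul_exp.integrableOn integrable_max_mul_exp.integrableOn
  have hIic : ∫ t in Iic (0:ℝ), max t 0 * Real.exp (-(1/2) * t ^ 2) = 0 := by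
    rw [setIntegral_congr_fun measurableSet_Iic
      (g := fun _ => (0:ℝ)) (fun t ht => by rw [max_eq_right ht, zero_mul])]
    simp
  have hIoi : ∫ t in Ioi (0:ℝ), max t 0 * Real.exp (-(1/2) * t ^ 2) = 1 := by
    rw [setIntegral_congr_fun measurableSet_Ioi
      (g := fun t => t * Real.exp (-(1/2) * t ^ 2)) (fun t ht => by rw [max_eq_left ht.out.le])]
    have hderiv : ∀ x ∈ Ici (0:ℝ),
        HasDerivAt (fun t => -Real.exp (-(1/2) * t ^ 2)) (x * Real.exp (-(1/2) * x ^ 2)) x := by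
      intro x _
      have h := (((hasDerivAt_pow 2 x).const_mul (-(1/2) : ℝ)).exp).neg
      refine h.congr_deriv ?_
      ring
    have htend : Filter.Tendsto (fun t : ℝ => -Real.exp (-(1/2) * t ^ 2))
        Filter.atTop (nhds 0) := by
      rw [show (0:ℝ) = -0 by norm_num]
      refine Filter.Tendsto.neg ?_
      refine Real.tendsto_exp_atBot.comp ?_
      have h1 : Filter.Tendsto (fun t : ℝ => (1/2) * t ^ 2) Filter.atTop Filter.atTop :=
        (Filter.tendsto_pow_atTop (by norm_num : (2:ℕ) ≠ 0)).const_mul_atTop (by norm_num)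
      have h2 := Filter.tendsto_neg_atTop_atBot.comp h1
      have heq : (fun t : ℝ => -(1/2) * t ^ 2) = fun t : ℝ => -((1/2) * t ^ 2) := by
        funext t; ring
      rw [heq]
      exact h2
    have := integral_Ioi_of_hasDerivAt_of_tendsto' hderiv hint.integrableOn htend
    rw [this]
    simp
  linarith [hsplit, hIic, hIoi]

noncomputable def gfun (d : ℕ) [NeZero d] (i : Fin d) (t : ℝ) : ℝ :=
  if i = 0 then max t 0 * Real.exp (-(1/2) * t ^ 2) else Real.exp (-(1/2) * t ^ 2)

lemma gfun_integrable (d : ℕ) [NeZero d] (i : Fin d) : Integrable (gfun d i) := by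
  by_cases hi : i = 0
  · refine (integrable_congr (Filter.Eventually.of_forall fun t => ?_)).mpr
      integrable_max_mul_exp
    simp [gfun, hi]
  · refine (integrable_congr (Filter.Eventually.of_forall fun t => ?_)).mpr
      (integrable_exp_neg_mul_sq (show (0:ℝ) < 1/2 by norm_num))
    simp [gfun, hi]

lemma prod_gfun (d : ℕ) [NeZero d] (x : Fin d → ℝ) :
    ∏ i, gfun d i (x i) = max (x 0) 0 * Real.exp (-(∑ i, x i ^ 2) / 2) := by
  rw [← Finset.mul_prod_erase Finset.univ _ (Finset.mem_univ (0 : Fin d))]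
  have h1 : gfun d 0 (x 0) = max (x 0) 0 * Real.exp (-(1/2) * x 0 ^ 2) := by
    simp [gfun]
  have h2 : ∏ i ∈ Finset.univ.erase (0 : Fin d), gfun d i (x i)
      = ∏ i ∈ Finset.univ.erase (0 : Fin d), Real.exp (-(1/2) * x i ^ 2) := by
    refine Finset.prod_congr rfl fun i hi => ?_
    simp [gfun, Finset.ne_of_mem_erase hi]
  have h3 : Real.exp (-(∑ i, x i ^ 2) / 2) = ∏ i, Real.exp (-(1/2) * x i ^ 2) := by
    rw [← Real.exp_sum]
    congr 1
    rw [← Finset.mul_sum]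
    ring
  rw [h1, h2, h3, ← Finset.mul_prod_erase Finset.univ
    (fun i => Real.exp (-(1/2) * x i ^ 2)) (Finset.mem_univ (0 : Fin d))]
  ring

lemma pos_part_facts (d : ℕ) (n : EuclideanSpace ℝ (Fin d)) (hn : ‖n‖ = 1) :
    Integrable (fun v => max ⟪n, v⟫ 0) (stdGaussian d) ∧
      ∫ v, max ⟪n, v⟫ 0 ∂(stdGaussian d) = (Real.sqrt (2 * π))⁻¹ := by
  have h2π : (0:ℝ) < 2 * π := by positivity
  -- d is positive
  have hd : 0 < d := by
    rcases Nat.eq_zero_or_pos d with rfl | hd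
    · exfalso
      have : ‖n‖ = 0 := by
        rw [EuclideanSpace.norm_eq]
        simp
      rw [this] at hn; norm_num at hn
    · exact hd
  haveI : NeZero d := ⟨hd.ne'⟩
  -- orthonormal basis with b 0 = n
  have hcard : Module.finrank ℝ (EuclideanSpace ℝ (Fin d)) = Fintype.card (Fin d) := by
    simp [finrank_euclideanSpace]
  have horth : Orthonormal ℝ (({0} : Set (Fin d)).restrict (fun _ => n)) := by
    constructor
    · intro i
      simpa [Set.restrict] using hn
    · intro i j hij
      exact absurd (Subsingleton.elim i j) hij
  obtain ⟨b, hb0⟩ := horth.exists_orthonormalBasis_extension_of_card_eq hcard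
  have hbn : b 0 = n := hb0 0 rfl
  set e : EuclideanSpace ℝ (Fin d) ≃ₗᵢ[ℝ] EuclideanSpace ℝ (Fin d) := b.repr with he
  have hip : ∀ v, ⟪n, v⟫ = e v 0 := by
    intro v
    rw [← hbn, ← b.repr_apply_apply]
  set g : EuclideanSpace ℝ (Fin d) → ℝ := fun w => max (w 0) 0 with hg
  have hcomp : (fun v => max ⟪n, v⟫ 0) = fun v => g (e v) := by
    funext v; rw [hip v]
  -- transfer to pi measure
  set φ := (MeasurableEquiv.toLp 2 (Fin d → ℝ)).symm with hφdef
  have hφ := EuclideanSpace.volume_preserving_symm_measurableEquiv_toLp (Fin d)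
  set c : ℝ := (2 * π) ^ (-(d : ℝ) / 2) with hc
  have hFG : ∀ v : EuclideanSpace ℝ (Fin d),
      ρ d v * g v = (fun x => c * ∏ i, gfun d i (x i)) (φ v) := by
    intro v
    have hnorm : ‖v‖ ^ 2 = ∑ i, v i ^ 2 := by
      rw [EuclideanSpace.norm_eq, Real.sq_sqrt (by positivity)]
      refine Finset.sum_congr rfl fun i _ => ?_
      rw [Real.norm_eq_abs, sq_abs]
    have hφv : ∀ i, φ v i = v i := fun i => rfl
    simp only [prod_gfun, hφv]
    rw [ρ, hnorm, hg]
    ring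
  have hGint : Integrable (fun x : Fin d → ℝ => c * ∏ i, gfun d i (x i)) volume :=
    (Integrable.fintype_prod_dep (fun i => gfun_integrable d i)).const_mul c
  have hval : ∫ x : Fin d → ℝ, c * ∏ i, gfun d i (x i) = (Real.sqrt (2 * π))⁻¹ := by
    rw [integral_const_mul, MeasureTheory.integral_fintype_prod_volume_eq_prod (f := gfun d)]
    have hprod : ∏ i, ∫ t, gfun d i t = Real.sqrt (2 * π) ^ (d - 1) := by
      rw [← Finset.mul_prod_erase Finset.univ _ (Finset.mem_univ (0 : Fin d))]
      have h0 : ∫ t, gfun d 0 t = 1 := by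
        simpa only [gfun, if_true] using integral_onedim
      have hi : ∀ i ∈ Finset.univ.erase (0 : Fin d),
          ∫ t, gfun d i t = Real.sqrt (2 * π) := by
        intro i hi
        have : (fun t => gfun d i t) = fun t : ℝ => Real.exp (-(1/2) * t ^ 2) := by
          funext t; simp [gfun, Finset.ne_of_mem_erase hi]
        rw [this, integral_gaussian]
        congr 1
        rw [div_div_eq_mul_div, div_eq_mul_inv]
        norm_num
        ring
      rw [Finset.prod_congr rfl hi, Finset.prod_const, h0, one_mul,
        Finset.card_erase_of_mem (Finset.mem_univ _), Finset.card_univ, Fintype.card_fin]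
    rw [hprod]
    -- arithmetic with rpow
    have hd1 : ((d - 1 : ℕ) : ℝ) = (d : ℝ) - 1 := by
      rw [Nat.cast_sub hd]; norm_num
    rw [Real.sqrt_eq_rpow, hc, ← Real.rpow_natCast ((2 * π) ^ ((1:ℝ)/2)) (d - 1),
      ← Real.rpow_mul h2π.le, ← Real.rpow_add h2π, hd1, ← Real.rpow_neg_one ((2 * π) ^ ((1:ℝ)/2)),
      ← Real.rpow_mul h2π.le]
    congr 1
    ring
  constructor
  · rw [hcomp, integrable_comp_isometry d e g, integrable_stdGaussian_iff]
    have : (fun v => ρ d v * g v) = fun v => (fun x => c * ∏ i, gfun d i (x i)) (φ v) :=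
      funext hFG
    rw [this]
    exact hφ.integrable_comp_emb φ.measurableEmbedding |>.mpr hGint
  · rw [hcomp, integral_comp_isometry d e g, integral_stdGaussian]
    have : (fun v => ρ d v * g v) = fun v => (fun x => c * ∏ i, gfun d i (x i)) (φ v) :=
      funext hFG
    rw [this, hφ.integral_comp' (fun x => c * ∏ i, gfun d i (x i)), hval]

/-- The reflection `v ↦ v - 2⟪n,v⟫n` as a linear map. -/
noncomputable def reflLinear (d : ℕ) (n : EuclideanSpace ℝ (Fin d)) :
    EuclideanSpace ℝ (Fin d) →ₗ[ℝ] EuclideanSpace ℝ (Fin d) where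
  toFun v := v - (2 * ⟪n, v⟫) • n
  map_add' u v := by
    simp only [inner_add_right]
    rw [show 2 * (⟪n, u⟫ + ⟪n, v⟫) = 2 * ⟪n, u⟫ + 2 * ⟪n, v⟫ by ring, add_smul]
    abel
  map_smul' c v := by
    simp only [inner_smul_right, RingHom.id_apply, smul_sub, smul_smul]
    congr 2
    ring

lemma reflLinear_apply (d : ℕ) (n : EuclideanSpace ℝ (Fin d)) (v : EuclideanSpace ℝ (Fin d)) :
    reflLinear d n v = v - (2 * ⟪n, v⟫) • n := rfl

lemma inner_reflLinear (d : ℕ) (n : EuclideanSpace ℝ (Fin d)) (hn : ‖n‖ = 1)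
    (v : EuclideanSpace ℝ (Fin d)) : ⟪n, reflLinear d n v⟫ = -⟪n, v⟫ := by
  have hnn : ⟪n, n⟫ = 1 := by
    rw [real_inner_self_eq_norm_sq, hn]; norm_num
  rw [reflLinear_apply, inner_sub_right, inner_smul_right, hnn]
  ring

lemma reflLinear_involutive (d : ℕ) (n : EuclideanSpace ℝ (Fin d)) (hn : ‖n‖ = 1) :
    Function.Involutive (reflLinear d n) := by
  intro v
  rw [reflLinear_apply d n (reflLinear d n v), inner_reflLinear d n hn v,
    reflLinear_apply d n v]
  rw [show 2 * -⟪n, v⟫ = -(2 * ⟪n, v⟫) by ring, neg_smul]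
  abel

/-- The reflection as a linear isometry equivalence. -/
noncomputable def reflIso (d : ℕ) (n : EuclideanSpace ℝ (Fin d)) (hn : ‖n‖ = 1) :
    EuclideanSpace ℝ (Fin d) ≃ₗᵢ[ℝ] EuclideanSpace ℝ (Fin d) where
  toLinearEquiv := LinearEquiv.ofInvolutive (reflLinear d n) (reflLinear_involutive d n hn)
  norm_map' v := by
    simp only [LinearEquiv.coe_ofInvolutive]
    have hnn : ⟪n, n⟫ = 1 := by
      rw [real_inner_self_eq_norm_sq, hn]; norm_num
    have h : ‖reflLinear d n v‖ ^ 2 = ‖v‖ ^ 2 := by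
      rw [reflLinear_apply, ← real_inner_self_eq_norm_sq, ← real_inner_self_eq_norm_sq]
      rw [inner_sub_sub_self]
      simp only [inner_smul_left, inner_smul_right, hnn, RCLike.conj_to_real]
      rw [real_inner_comm n v]
      ring
    have h1 : (0:ℝ) ≤ ‖reflLinear d n v‖ := norm_nonneg _
    have h2 : (0:ℝ) ≤ ‖v‖ := norm_nonneg _
    nlinarith

lemma reflIso_apply (d : ℕ) (n : EuclideanSpace ℝ (Fin d)) (hn : ‖n‖ = 1)
    (v : EuclideanSpace ℝ (Fin d)) : reflIso d n hn v = v - (2 * ⟪n, v⟫) • n := rfl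

end StdGaussianAux

open StdGaussianAux

theorem stmt_6 (d : ℕ) (n : EuclideanSpace ℝ (Fin d)) (hn : ‖n‖ = 1)
    (α β : ℝ) (hα : α ∈ Icc (0:ℝ) 1) (hβ : β ∈ Icc (0:ℝ) 1) (hαβ : α + β ≤ 1)
    (f : EuclideanSpace ℝ (Fin d) → ℝ) (Df : ℝ)
    (hDf : Df = Real.sqrt (2 * π) * ∫ w, f w * max ⟪n, w⟫ 0 ∂(stdGaussian d))
    (hbc : ∀ v, ⟪n, v⟫ < 0 → f v = α * Df + β * f (v - (2 * ⟪n, v⟫) • n))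
    (hint1 : Integrable (fun v => f v ^ 2 * |⟪n, v⟫|) (stdGaussian d))
    (hint2 : Integrable (fun v => f v * max ⟪n, v⟫ 0) (stdGaussian d)) :
    (∫ v, f v ^ 2 * ⟪n, v⟫ ∂(stdGaussian d)) =
      (∫ v, (α ^ 2 + 2 * α * β) * (f v - Df) ^ 2 * max ⟪n, v⟫ 0 ∂(stdGaussian d)) +
        (∫ v, (1 - (α + β) ^ 2) * f v ^ 2 * max ⟪n, v⟫ 0 ∂(stdGaussian d)) := by
  classical
  set μ := stdGaussian d with hμ
  obtain ⟨hI0int, hI0val⟩ := pos_part_facts d n hn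
  set e := reflIso d n hn with he
  have hev : ∀ v, e v = v - (2 * ⟪n, v⟫) • n := reflIso_apply d n hn
  have hie : ∀ v, ⟪n, e v⟫ = -⟪n, v⟫ := by
    intro v; rw [hev v]; exact inner_reflLinear d n hn v
  have hee : ∀ v, e (e v) = v := by
    intro v
    have := reflLinear_involutive d n hn v
    rw [hev, hev]
    exact this
  -- measurability of the indicator trick
  have hmeas_inner : Measurable fun v : EuclideanSpace ℝ (Fin d) => ⟪n, v⟫ :=
    (continuous_const.inner continuous_id).measurable
  have hχ : Measurable fun v : EuclideanSpace ℝ (Fin d) =>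
      (if 0 < ⟪n, v⟫ then (1:ℝ) else 0) := by
    refine Measurable.ite ?_ measurable_const measurable_const
    exact measurableSet_lt measurable_const hmeas_inner
  have hχ' : Measurable fun v : EuclideanSpace ℝ (Fin d) =>
      (if ⟪n, v⟫ < 0 then (1:ℝ) else 0) := by
    refine Measurable.ite ?_ measurable_const measurable_const
    exact measurableSet_lt hmeas_inner measurable_const
  -- integrability of f² · pos
  have hfpos : Integrable (fun v => f v ^ 2 * max ⟪n, v⟫ 0) μ := by
    have hAE : AEStronglyMeasurable (fun v => f v ^ 2 * max ⟪n, v⟫ 0) μ := by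
      have heq : (fun v => f v ^ 2 * max ⟪n, v⟫ 0)
          = fun v => (f v ^ 2 * |⟪n, v⟫|) * (if 0 < ⟪n, v⟫ then (1:ℝ) else 0) := by
        funext v
        by_cases h : 0 < ⟪n, v⟫
        · rw [if_pos h, mul_one, max_eq_left h.le, abs_of_pos h]
        · rw [if_neg h, mul_zero, max_eq_right (not_lt.mp h), mul_zero]
      rw [heq]
      exact hint1.aestronglyMeasurable.mul hχ.aestronglyMeasurable
    refine hint1.mono' hAE (Filter.Eventually.of_forall fun v => ?_)
    rw [Real.norm_eq_abs, abs_mul, abs_of_nonneg (sq_nonneg _),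
      abs_of_nonneg (le_max_right _ _)]
    exact mul_le_mul_of_nonneg_left (max_le (le_abs_self _) (abs_nonneg _)) (sq_nonneg _)
  -- integrability of f² · neg
  have hfneg : Integrable (fun v => f v ^ 2 * max (-⟪n, v⟫) 0) μ := by
    have hAE : AEStronglyMeasurable (fun v => f v ^ 2 * max (-⟪n, v⟫) 0) μ := by
      have heq : (fun v => f v ^ 2 * max (-⟪n, v⟫) 0)
          = fun v => (f v ^ 2 * |⟪n, v⟫|) * (if ⟪n, v⟫ < 0 then (1:ℝ) else 0) := by
        funext v
        by_cases h : ⟪n, v⟫ < 0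
        · rw [if_pos h, mul_one, max_eq_left (neg_nonneg.mpr h.le), abs_of_neg h]
        · rw [if_neg h, mul_zero, max_eq_right (neg_nonpos.mpr (not_lt.mp h)), mul_zero]
      rw [heq]
      exact hint1.aestronglyMeasurable.mul hχ'.aestronglyMeasurable
    refine hint1.mono' hAE (Filter.Eventually.of_forall fun v => ?_)
    rw [Real.norm_eq_abs, abs_mul, abs_of_nonneg (sq_nonneg _),
      abs_of_nonneg (le_max_right _ _)]
    refine mul_le_mul_of_nonneg_left (max_le ?_ (abs_nonneg _)) (sq_nonneg _)
    exact neg_le_abs _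
  -- the three basic integrals
  set I2 := ∫ v, f v ^ 2 * max ⟪n, v⟫ 0 ∂μ with hI2
  set I1 := ∫ v, f v * max ⟪n, v⟫ 0 ∂μ with hI1
  set I0 := ∫ v, max ⟪n, v⟫ 0 ∂μ with hI0
  -- general linear-combination integral
  have key : ∀ a b c : ℝ,
      ∫ v, (a * f v ^ 2 + b * f v + c) * max ⟪n, v⟫ 0 ∂μ = a * I2 + b * I1 + c * I0 := by
    intro a b c
    have heq : (fun v => (a * f v ^ 2 + b * f v + c) * max ⟪n, v⟫ 0)
        = fun v => a * (f v ^ 2 * max ⟪n, v⟫ 0) + (b * (f v * max ⟪n, v⟫ 0)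
          + c * max ⟪n, v⟫ 0) := by
      funext v; ring
    have hbc2 : Integrable (fun v => b * (f v * max ⟪n, v⟫ 0) + c * max ⟪n, v⟫ 0) μ :=
      (hint2.const_mul b).add (hI0int.const_mul c)
    rw [heq, integral_add (hfpos.const_mul a) hbc2,
      integral_add (hint2.const_mul b) (hI0int.const_mul c),
      integral_const_mul, integral_const_mul, integral_const_mul]
    ring
  -- split the LHS
  have hsplit : (∫ v, f v ^ 2 * ⟪n, v⟫ ∂μ)
      = I2 - ∫ v, f v ^ 2 * max (-⟪n, v⟫) 0 ∂μ := by
    rw [← integral_sub hfpos hfneg]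
    refine integral_congr_ae (Filter.Eventually.of_forall fun v => ?_)
    have : max ⟪n, v⟫ 0 - max (-⟪n, v⟫) 0 = ⟪n, v⟫ := by
      rcases le_total (⟪n, v⟫) 0 with h | h
      · rw [max_eq_right h, max_eq_left (by linarith)]; ring
      · rw [max_eq_left h, max_eq_right (by linarith)]; ring
    calc f v ^ 2 * ⟪n, v⟫ = f v ^ 2 * (max ⟪n, v⟫ 0 - max (-⟪n, v⟫) 0) := by rw [this]
      _ = f v ^ 2 * max ⟪n, v⟫ 0 - f v ^ 2 * max (-⟪n, v⟫) 0 := by ring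
  -- reflection identity
  have hrefl : (∫ v, f v ^ 2 * max (-⟪n, v⟫) 0 ∂μ)
      = ∫ v, (β ^ 2 * f v ^ 2 + 2 * α * β * Df * f v + α ^ 2 * Df ^ 2) * max ⟪n, v⟫ 0 ∂μ := by
    have h1 := integral_comp_isometry d e (fun v => f v ^ 2 * max (-⟪n, v⟫) 0)
    rw [hμ, ← h1]
    refine integral_congr_ae (Filter.Eventually.of_forall fun v => ?_)
    simp only [hie]
    rw [neg_neg]
    rcases lt_or_ge 0 (⟪n, v⟫) with h | h
    · have hv : ⟪n, e v⟫ < 0 := by rw [hie]; linarith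
      have hfe : f (e v) = α * Df + β * f v := by
        have := hbc (e v) hv
        rw [← hev (e v), hee v] at this
        exact this
      rw [hfe]; ring
    · rw [max_eq_right h, mul_zero, mul_zero]
  -- evaluate both sides using `key`
  have hLHS : (∫ v, f v ^ 2 * ⟪n, v⟫ ∂μ)
      = I2 - (β ^ 2 * I2 + 2 * α * β * Df * I1 + α ^ 2 * Df ^ 2 * I0) := by
    rw [hsplit, hrefl, key (β ^ 2) (2 * α * β * Df) (α ^ 2 * Df ^ 2)]
  have hR1 : (∫ v, (α ^ 2 + 2 * α * β) * (f v - Df) ^ 2 * max ⟪n, v⟫ 0 ∂μ)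
      = (α ^ 2 + 2 * α * β) * I2 + (-(2 * (α ^ 2 + 2 * α * β) * Df)) * I1
        + (α ^ 2 + 2 * α * β) * Df ^ 2 * I0 := by
    rw [← key]
    refine integral_congr_ae (Filter.Eventually.of_forall fun v => ?_)
    ring
  have hR2 : (∫ v, (1 - (α + β) ^ 2) * f v ^ 2 * max ⟪n, v⟫ 0 ∂μ)
      = (1 - (α + β) ^ 2) * I2 + 0 * I1 + 0 * I0 := by
    rw [← key]
    refine integral_congr_ae (Filter.Eventually.of_forall fun v => ?_)
    ring
  -- the relation I1 = Df * I0
  have hsqrt : Real.sqrt (2 * π) ≠ 0 := by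
    refine ne_of_gt (Real.sqrt_pos.mpr (by positivity))
  have hI1Df : I1 = Df * I0 := by
    rw [hI0val, hDf]
    field_simp
  rw [hLHS, hR1, hR2, hI1Df]
  ring
end
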